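/- arXiv:2601.22510 — 7 statements merged into one kernel-verified Lean document; each statement's English description precedes it below -/
import Mathlib

section
/- Let A, B, C, D be independent random variables uniformly distributed on {0,1,...,999}, and let a2 denote the tens digit of A and e1 the hundreds digit of S = A + B + C + D (writing S = e0*1000 + e1*100 + e2*10 + e3 with e0 the thousands digit). Then a2 and e1 are independent random variables. -/
/-!
Condition on `T = B + C + D = t`. The map `a ↦ (tens digit of a, hundreds digit of a + t)` sends
the uniform distribution on `{0, …, 999}` to the uniform distribution on `{0, …, 9}²`: every pair
has exactly ten preimages, as the units digit is free, the tens digit is prescribed, and the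
hundreds digit is then forced. Since `A` is independent of `T`, the pair `(a2, e1)` is uniform on
`{0, …, 9}²` whatever the law of `T`, so it is the product of its marginals.
-/

open MeasureTheory ProbabilityTheory Finset
open scoped ENNReal

section UniformOn

variable {α β : Type*} [MeasurableSpace α] [MeasurableSingletonClass α]
  [MeasurableSpace β] [MeasurableSingletonClass β]

lemma uniformOn_finset_singleton [DecidableEq α] (s : Finset α) (a : α) :
    uniformOn (s : Set α) {a} = if a ∈ s then (#s : ℝ≥0∞)⁻¹ else 0 := by
  rw [← coe_singleton, uniformOn_apply_finset, inter_singleton]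
  split_ifs <;> simp

variable [Countable α] [Countable β]

lemma uniformOn_finset_product (s : Finset α) (t : Finset β) :
    uniformOn ((s ×ˢ t : Finset (α × β)) : Set (α × β)) =
      (uniformOn (s : Set α)).prod (uniformOn (t : Set β)) := by
  classical
  refine Measure.ext_of_singleton fun ⟨a, b⟩ => ?_
  rw [← Set.singleton_prod_singleton, Measure.prod_prod, Set.singleton_prod_singleton]
  simp only [uniformOn_finset_singleton, mem_product, card_product]
  split_ifs <;> simp_all [ENNReal.mul_inv]

lemma map_uniformOn_of_card_fiber [DecidableEq β] {s : Finset α} {t : Finset β} {f : α → β}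
    {k : ℕ} (hk : k ≠ 0) (hf : (s : Set α).MapsTo f t)
    (hfiber : ∀ b ∈ t, #{a ∈ s | f a = b} = k) :
    (uniformOn (s : Set α)).map f = uniformOn (t : Set β) := by
  classical
  have hcard : #s = #t * k := by
    rw [card_eq_sum_card_fiberwise hf, sum_const_nat hfiber]
  refine Measure.ext_of_singleton fun b => ?_
  have hfib : (s : Set α) ∩ f ⁻¹' {b} = ↑{a ∈ s | f a = b} := by ext; simp
  rw [Measure.map_apply (measurable_of_countable f) (measurableSet_singleton b),
    ← uniformOn_inter_self s.finite_toSet, hfib, uniformOn_apply_finset,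
    inter_eq_right.mpr (filter_subset _ _), uniformOn_finset_singleton, hcard]
  split_ifs with hb
  · rw [hfiber b hb, Nat.cast_mul, ENNReal.div_eq_inv_mul,
      ENNReal.mul_inv (.inr (by simp)) (.inl (by simp)), mul_assoc,
      ENNReal.inv_mul_cancel (by simpa) (by simp), mul_one]
  · rw [filter_eq_empty_iff.mpr fun a ha hab => hb (by simpa [hab] using hf ha)]
    simp

end UniformOn

lemma MeasureTheory.Measure.map_uncurry_prod_of_map_eq {α β γ : Type*} [MeasurableSpace α]
    [MeasurableSpace β] [MeasurableSpace γ] {ν₁ : Measure α} {ν₂ : Measure β}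
    [SFinite ν₁] [SFinite ν₂] {ν : Measure γ} {h : α → β → γ} (hh : Measurable (Function.uncurry h))
    (hfib : ∀ b, ν₁.map (h · b) = ν) :
    (ν₁.prod ν₂).map (Function.uncurry h) = ν₂ Set.univ • ν := by
  ext s hs
  rw [Measure.map_apply hh hs, Measure.prod_apply_symm (hh hs), Measure.smul_apply, smul_eq_mul,
    mul_comm, ← lintegral_const]
  refine lintegral_congr fun b => ?_
  rw [← hfib b]
  exact (Measure.map_apply (hh.comp measurable_prodMk_right) hs).symm

lemma hasLaw_uniformOn_of_measure_eq {Ω α : Type*} [MeasurableSpace Ω] [MeasurableSpace α]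
    [MeasurableSingletonClass α] [Countable α] {μ : Measure Ω} {Y : Ω → α} {s : Finset α}
    (hY : Measurable Y) (hmem : ∀ ω, Y ω ∈ s)
    (hpt : ∀ a ∈ s, μ {ω | Y ω = a} = (#s : ℝ≥0∞)⁻¹) :
    HasLaw Y (uniformOn (s : Set α)) μ := by
  classical
  refine ⟨hY.aemeasurable, Measure.ext_of_singleton fun a => ?_⟩
  rw [Measure.map_apply hY (measurableSet_singleton a), uniformOn_finset_singleton]
  split_ifs with ha
  · exact hpt a ha
  · have : Y ⁻¹' {a} = ∅ := Set.eq_empty_of_forall_notMem fun ω hω => ha (hω ▸ hmem ω)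
    rw [this, measure_empty]

lemma indepFun_of_hasLaw_prod {Ω α β : Type*} [MeasurableSpace Ω] [MeasurableSpace α]
    [MeasurableSpace β] {μ : Measure Ω} {f : Ω → α} {g : Ω → β} {ν₁ : Measure α} {ν₂ : Measure β}
    [IsProbabilityMeasure ν₁] [IsProbabilityMeasure ν₂]
    (h : HasLaw (fun ω => (f ω, g ω)) (ν₁.prod ν₂) μ) : IndepFun f g μ := by
  have := h.isProbabilityMeasure
  have hf : HasLaw f ν₁ μ :=
    HasLaw.comp (X := fun ω => (f ω, g ω)) ⟨measurable_fst.aemeasurable, by simp⟩ h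
  have hg : HasLaw g ν₂ μ :=
    HasLaw.comp (X := fun ω => (f ω, g ω)) ⟨measurable_snd.aemeasurable, by simp⟩ h
  exact (indepFun_iff_hasLaw_prodMk_prod hf hg).mpr h

lemma card_filter_tens_digit_hundreds_digit_add (t x y : ℕ) (hx : x < 10) (hy : y < 10) :
    #{a ∈ range 1000 | (a / 10 % 10, (a + t) / 100 % 10) = (x, y)} = 10 := by
  -- `a` is determined by its units digit `l`: its hundreds digit must compensate the carry
  -- of `10 x + l + t` into the hundreds place.
  refine card_nbij' (fun a => a % 10)
    (fun l => 100 * ((y + 10 - (10 * x + l + t) / 100 % 10) % 10) + 10 * x + l)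
    ?_ ?_ ?_ ?_ |>.trans (card_range 10)
  all_goals
    intro a ha
    simp only [coe_filter, coe_range, mem_range, Set.mem_ofPred_eq, Set.mem_Iio,
      Prod.mk.injEq] at ha ⊢
    omega

lemma map_uniformOn_tens_digit_hundreds_digit_add (t : ℕ) :
    (uniformOn (range 1000 : Set ℕ)).map (fun a => (a / 10 % 10, (a + t) / 100 % 10)) =
      (uniformOn (range 10 : Set ℕ)).prod (uniformOn (range 10 : Set ℕ)) := by
  rw [← uniformOn_finset_product]
  refine map_uniformOn_of_card_fiber (k := 10) (by norm_num) ?_ fun ⟨x, y⟩ hxy => ?_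
  · intro a _
    simp only [coe_product, coe_range, Set.mem_prod, Set.mem_Iio]
    omega
  · rw [mem_product, mem_range, mem_range] at hxy
    exact card_filter_tens_digit_hundreds_digit_add t x y hxy.1 hxy.2

/-- For `A, B, C, D` independent uniform on `{0,...,999}`, the tens digit of `A`
and the hundreds digit of `S = A + B + C + D` are independent. -/
theorem tens_digit_indep_hundreds_digit_of_sum
    {Ω : Type*} [MeasurableSpace Ω] (μ : Measure Ω) [IsProbabilityMeasure μ]
    (X : Fin 4 → Ω → ℕ)
    (hIndep : iIndepFun X μ)
    (hMeas : ∀ i, Measurable (X i))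
    (hVal : ∀ i ω, X i ω < 1000)
    (hUnif : ∀ i, ∀ k : ℕ, k < 1000 → μ {ω | X i ω = k} = 1 / 1000) :
    IndepFun (fun ω => X 0 ω / 10 % 10)
      (fun ω => (X 0 ω + X 1 ω + X 2 ω + X 3 ω) / 100 % 10) μ := by
  set T : Ω → ℕ := ∑ j ∈ ({1, 2, 3} : Finset (Fin 4)), X j
  have hT : Measurable T := by fun_prop
  have hX0 : HasLaw (X 0) (uniformOn (range 1000 : Set ℕ)) μ :=
    hasLaw_uniformOn_of_measure_eq (hMeas 0) (fun ω => mem_range.2 (hVal 0 ω))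
      (fun k hk => by simpa using hUnif 0 k (mem_range.1 hk))
  have hpair :
      HasLaw (fun ω => (X 0 ω, T ω)) ((uniformOn (range 1000 : Set ℕ)).prod (μ.map T)) μ :=
    (hIndep.indepFun_finsetSum_of_notMem hMeas (by decide)).symm.hasLaw_prod hX0
      ⟨hT.aemeasurable, rfl⟩
  have hdigits : HasLaw (Function.uncurry fun a t => (a / 10 % 10, (a + t) / 100 % 10))
      ((uniformOn (range 10 : Set ℕ)).prod (uniformOn (range 10 : Set ℕ)))
      ((uniformOn (range 1000 : Set ℕ)).prod (μ.map T)) := by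
    refine ⟨(measurable_of_countable _).aemeasurable, ?_⟩
    rw [Measure.map_uncurry_prod_of_map_eq (measurable_of_countable _)
      map_uniformOn_tens_digit_hundreds_digit_add, Measure.map_apply hT .univ]
    simp
  have : IsProbabilityMeasure (uniformOn (range 10 : Set ℕ)) :=
    isProbabilityMeasure_uniformOn (finite_toSet _) (by simp)
  refine indepFun_of_hasLaw_prod ((hdigits.comp hpair).congr (.of_forall fun ω => ?_))
  simp [T, add_assoc]
end

section
/- Let A, B, C, D be independent random variables uniformly distributed on {0,1,...,999}, with hundreds digits a1, b1, c1, d1 respectively, and let S = A + B + C + D with thousands digit e0 = floor(S/1000). Then a1 and e0 are not independent; equivalently, the mutual information I(a1; e0) is strictly positive. -/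
/-!
The vector `(A, B, C, D)` is uniform on `{0,…,999}⁴`, so every event about it has probability
(number of outcomes) / 1000⁴. Adding 900 to `A` maps the outcomes with `a1 = 0` and `e0 = 3`
injectively, but not onto, the outcomes with `a1 = 9` and `e0 = 3` (`(999, 700, 700, 700)` is
missed). Since `a1 = 0` and `a1 = 9` both have probability `1/10`, the joint law of `(a1, e0)`
cannot be the product of the marginals at both `(0, 3)` and `(9, 3)`. Gibbs' inequality
`p log (p / q) ≥ p - q`, strict for `p ≠ q`, then makes the mutual information positive.
-/

open MeasureTheory ProbabilityTheory Finset

-- this linter exceeds the recursion limit on hypotheses mentioning `piFinset fun _ => range 1000`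
set_option linter.constructorNameAsVariable false

/-- Mutual information of two `ℕ`-valued random variables whose values lie in
`{0,...,nx-1}` and `{0,...,ny-1}` respectively. -/
noncomputable def mutualInfoNat {Ω : Type*} [MeasurableSpace Ω] (μ : Measure Ω)
    (X Y : Ω → ℕ) (nx ny : ℕ) : ℝ :=
  ∑ x ∈ range nx, ∑ y ∈ range ny,
    (μ {ω | X ω = x ∧ Y ω = y}).toReal *
      Real.log ((μ {ω | X ω = x ∧ Y ω = y}).toReal /
        ((μ {ω | X ω = x}).toReal * (μ {ω | Y ω = y}).toReal))

section Gibbs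

open InformationTheory Real

lemma mul_log_div_sub_sub_eq_mul_klFun (p : ℝ) {q : ℝ} (hq : q ≠ 0) :
    p * log (p / q) - (p - q) = q * klFun (p / q) := by
  rw [klFun_apply]; field_simp; ring

variable {p q : ℝ}

lemma sub_le_mul_log_div (hp : 0 ≤ p) (hq : 0 ≤ q) (hpq : q = 0 → p = 0) :
    p - q ≤ p * log (p / q) := by
  rcases hq.eq_or_lt with rfl | hq
  · simp [hpq rfl]
  · have := mul_log_div_sub_sub_eq_mul_klFun p hq.ne'
    linarith [mul_nonneg hq.le (klFun_nonneg (div_nonneg hp hq.le))]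

lemma sub_lt_mul_log_div (hp : 0 ≤ p) (hq : 0 ≤ q) (hpq : q = 0 → p = 0) (hne : p ≠ q) :
    p - q < p * log (p / q) := by
  have hq : 0 < q := hq.lt_of_ne' fun h => hne (by rw [h, hpq h])
  have hkl : 0 < klFun (p / q) := (klFun_nonneg (div_nonneg hp hq.le)).lt_of_ne' fun h =>
    hne <| (div_eq_one_iff_eq hq.ne').1 <| (klFun_eq_zero_iff (div_nonneg hp hq.le)).1 h
  linarith [mul_log_div_sub_sub_eq_mul_klFun p hq.ne', mul_pos hq hkl]

end Gibbs

section Counting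

variable {Ω α : Type*} [MeasurableSpace Ω] {μ : Measure Ω}

lemma sum_toReal_measure_preimage_singleton [IsProbabilityMeasure μ] {f : Ω → α}
    {s : Finset α} (hfs : ∀ ω, f ω ∈ s) (hf : ∀ a ∈ s, MeasurableSet (f ⁻¹' {a})) :
    ∑ a ∈ s, (μ (f ⁻¹' {a})).toReal = 1 := by
  rw [← ENNReal.toReal_sum fun a _ => measure_ne_top μ _, sum_measure_preimage_singleton s hf,
    show f ⁻¹' ↑s = Set.univ from Set.eq_univ_of_forall hfs, measure_univ, ENNReal.toReal_one]

lemma measure_setOf_comp_eq_card_filter_mul {f : Ω → α} {S : Finset α} {c : ENNReal}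
    (hfS : ∀ ω, f ω ∈ S) (hf : ∀ a ∈ S, MeasurableSet (f ⁻¹' {a}))
    (hc : ∀ a ∈ S, μ (f ⁻¹' {a}) = c) (P : α → Prop) [DecidablePred P] :
    μ {ω | P (f ω)} = #{a ∈ S | P a} * c := by
  have hset : {ω | P (f ω)} = f ⁻¹' ↑{a ∈ S | P a} := by ext ω; simp [hfS ω]
  rw [hset, ← sum_measure_preimage_singleton _ fun a ha => hf a (mem_filter.1 ha).1,
    sum_congr rfl fun a ha => hc a (mem_filter.1 ha).1, sum_const, nsmul_eq_mul]

lemma ProbabilityTheory.iIndepFun.measure_preimage_singleton_pi {ι : Type*} [Fintype ι]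
    [MeasurableSpace α] [MeasurableSingletonClass α] {X : ι → Ω → α} (hX : iIndepFun X μ)
    (v : ι → α) : μ ((fun ω i => X i ω) ⁻¹' {v}) = ∏ i, μ (X i ⁻¹' {v i}) := by
  have hset : (fun ω i => X i ω) ⁻¹' {v} = ⋂ i, X i ⁻¹' {v i} := by ext ω; simp [funext_iff]
  rw [hset, hX.meas_iInter fun i => ⟨{v i}, measurableSet_singleton _, rfl⟩]

lemma ProbabilityTheory.iIndepFun.measure_setOf_eq_card_filter_mul {ι : Type*} [Fintype ι]
    [DecidableEq ι] {X : ι → Ω → ℕ} {N : ℕ} {c : ENNReal} (hX : iIndepFun X μ)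
    (hmeas : ∀ i, Measurable (X i)) (hlt : ∀ i ω, X i ω < N)
    (hunif : ∀ i k, k < N → μ {ω | X i ω = k} = c) (P : (ι → ℕ) → Prop) [DecidablePred P] :
    μ {ω | P (fun i => X i ω)} =
      #{v ∈ Fintype.piFinset fun _ => range N | P v} * c ^ Fintype.card ι := by
  refine measure_setOf_comp_eq_card_filter_mul
    (fun ω => Fintype.mem_piFinset.2 fun i => mem_range.2 (hlt i ω))
    (fun v _ => measurable_pi_lambda _ hmeas (measurableSet_singleton v)) (fun v hv => ?_) P
  rw [hX.measure_preimage_singleton_pi, ← card_univ, ← prod_const]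
  exact prod_congr rfl fun i _ => hunif i (v i) (mem_range.1 (Fintype.mem_piFinset.1 hv i))

end Counting

theorem mutualInfoNat_pos {Ω : Type*} [MeasurableSpace Ω] {μ : Measure Ω}
    [IsProbabilityMeasure μ] {X Y : Ω → ℕ} {nx ny x y : ℕ} (hX : Measurable X)
    (hY : Measurable Y) (hXlt : ∀ ω, X ω < nx) (hYlt : ∀ ω, Y ω < ny) (hx : x < nx)
    (hy : y < ny) (hne : μ {ω | X ω = x ∧ Y ω = y} ≠ μ {ω | X ω = x} * μ {ω | Y ω = y}) :
    0 < mutualInfoNat μ X Y nx ny := by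
  set p : ℕ → ℕ → ℝ := fun a b => (μ {ω | X ω = a ∧ Y ω = b}).toReal
  set q : ℕ → ℕ → ℝ := fun a b => (μ (X ⁻¹' {a})).toReal * (μ (Y ⁻¹' {b})).toReal
  have hp_le_left (a b : ℕ) : p a b ≤ (μ (X ⁻¹' {a})).toReal :=
    ENNReal.toReal_mono (measure_ne_top μ _) (measure_mono fun _ h => h.1)
  have hp_le_right (a b : ℕ) : p a b ≤ (μ (Y ⁻¹' {b})).toReal :=
    ENNReal.toReal_mono (measure_ne_top μ _) (measure_mono fun _ h => h.2)
  have hpq (a b : ℕ) : q a b = 0 → p a b = 0 := fun h =>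
    (mul_eq_zero.1 h).elim (fun h => le_antisymm (h ▸ hp_le_left a b) ENNReal.toReal_nonneg)
      (fun h => le_antisymm (h ▸ hp_le_right a b) ENNReal.toReal_nonneg)
  have hq_nonneg (a b : ℕ) : 0 ≤ q a b := mul_nonneg ENNReal.toReal_nonneg ENNReal.toReal_nonneg
  have hsum_p : ∑ z ∈ range nx ×ˢ range ny, p z.1 z.2 = 1 := by
    refine (sum_congr rfl fun z _ => ?_).trans (sum_toReal_measure_preimage_singleton (μ := μ)
      (fun ω => mem_product.2 ⟨mem_range.2 (hXlt ω), mem_range.2 (hYlt ω)⟩)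
      fun z _ => (hX.prodMk hY) (measurableSet_singleton z))
    simp only [p]
    congr 2; ext ω; simp [Prod.ext_iff]
  have hsum_q : ∑ z ∈ range nx ×ˢ range ny, q z.1 z.2 = 1 := by
    rw [sum_product]
    simp only [q]
    rw [← sum_mul_sum,
      sum_toReal_measure_preimage_singleton (fun ω => mem_range.2 (hXlt ω))
        fun a _ => hX (measurableSet_singleton a),
      sum_toReal_measure_preimage_singleton (fun ω => mem_range.2 (hYlt ω))
        fun b _ => hY (measurableSet_singleton b), one_mul]
  have hne' : p x y ≠ q x y := by
    intro h
    simp only [p, q, ← ENNReal.toReal_mul] at h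
    exact hne <| (ENNReal.toReal_eq_toReal_iff' (measure_ne_top μ _)
      (ENNReal.mul_ne_top (measure_ne_top μ _) (measure_ne_top μ _))).1 h
  calc 0 = ∑ z ∈ range nx ×ˢ range ny, (p z.1 z.2 - q z.1 z.2) := by
        rw [sum_sub_distrib, hsum_p, hsum_q, sub_self]
    _ < ∑ z ∈ range nx ×ˢ range ny, p z.1 z.2 * Real.log (p z.1 z.2 / q z.1 z.2) :=
        sum_lt_sum (fun z _ => sub_le_mul_log_div ENNReal.toReal_nonneg (hq_nonneg _ _) (hpq _ _))
          ⟨(x, y), mem_product.2 ⟨mem_range.2 hx, mem_range.2 hy⟩,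
            sub_lt_mul_log_div ENNReal.toReal_nonneg (hq_nonneg _ _) (hpq _ _) hne'⟩
    _ = mutualInfoNat μ X Y nx ny := sum_product _ _ _

lemma filter_hundreds_digit_eq {d : ℕ} (hd : d < 10) :
    {k ∈ range 1000 | k / 100 % 10 = d} = Ico (100 * d) (100 * d + 100) := by
  ext k; simp only [mem_filter, mem_range, mem_Ico]; omega

lemma card_filter_hundreds_digit_eq {d : ℕ} (hd : d < 10) :
    #{k ∈ range 1000 | k / 100 % 10 = d} = 100 := by
  simp [filter_hundreds_digit_eq hd]

lemma mem_piFinset_fin_four {N : ℕ} {v : Fin 4 → ℕ} :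
    v ∈ Fintype.piFinset (fun _ => range N) ↔ v 0 < N ∧ v 1 < N ∧ v 2 < N ∧ v 3 < N := by
  simp [Fintype.mem_piFinset, Fin.forall_fin_succ]

lemma card_thousands_digit_three_hundreds_digit_zero_lt_nine :
    #{v ∈ Fintype.piFinset (fun _ : Fin 4 => range 1000) |
        v 0 / 100 % 10 = 0 ∧ (v 0 + v 1 + v 2 + v 3) / 1000 = 3} <
      #{v ∈ Fintype.piFinset (fun _ : Fin 4 => range 1000) |
        v 0 / 100 % 10 = 9 ∧ (v 0 + v 1 + v 2 + v 3) / 1000 = 3} := by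
  set shift : (Fin 4 → ℕ) → Fin 4 → ℕ := fun v => v + Pi.single 0 900
  rw [← card_image_of_injective _ (add_left_injective _ : shift.Injective)]
  refine card_lt_card ((ssubset_iff_of_subset ?_).2 ⟨![999, 700, 700, 700], ?_, ?_⟩)
  · rw [image_subset_iff]
    intro v hv
    simp only [mem_filter, mem_piFinset_fin_four] at hv ⊢
    simp only [Pi.add_apply, Pi.single_apply, Fin.reduceEq, reduceIte, add_zero]
    omega
  · rw [mem_filter, mem_piFinset_fin_four]
    simp
  · intro hw
    rw [mem_image] at hw
    obtain ⟨v, hv, hvw⟩ := hw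
    simp only [mem_filter, mem_piFinset_fin_four] at hv
    have h0 := congrFun hvw 0
    have h1 := congrFun hvw 1
    have h2 := congrFun hvw 2
    have h3 := congrFun hvw 3
    simp only [Pi.add_apply, Pi.single_apply, Fin.reduceEq, reduceIte, add_zero,
      Matrix.cons_val] at h0 h1 h2 h3
    omega

lemma exists_measure_hundreds_digit_inter_ne_mul {Ω : Type*} [MeasurableSpace Ω]
    (μ : Measure Ω) (X : Fin 4 → Ω → ℕ) (hIndep : iIndepFun X μ)
    (hMeas : ∀ i, Measurable (X i)) (hVal : ∀ i ω, X i ω < 1000)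
    (hUnif : ∀ i, ∀ k : ℕ, k < 1000 → μ {ω | X i ω = k} = 1 / 1000) :
    ∃ d < 10, μ {ω | X 0 ω / 100 % 10 = d ∧ (X 0 ω + X 1 ω + X 2 ω + X 3 ω) / 1000 = 3} ≠
      μ {ω | X 0 ω / 100 % 10 = d} * μ {ω | (X 0 ω + X 1 ω + X 2 ω + X 3 ω) / 1000 = 3} := by
  have hjoint (d : ℕ) := hIndep.measure_setOf_eq_card_filter_mul hMeas hVal hUnif
    fun v => v 0 / 100 % 10 = d ∧ (v 0 + v 1 + v 2 + v 3) / 1000 = 3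
  have hmarginal (d : ℕ) (hd : d < 10) : μ {ω | X 0 ω / 100 % 10 = d} = 100 * (1 / 1000) := by
    rw [measure_setOf_comp_eq_card_filter_mul (fun ω => mem_range.2 (hVal 0 ω))
      (fun k _ => hMeas 0 (measurableSet_singleton k)) (fun k hk => hUnif 0 k (mem_range.1 hk))
      fun k => k / 100 % 10 = d, card_filter_hundreds_digit_eq hd, Nat.cast_ofNat]
  by_contra! hprod
  have h09 := (hprod 0 (by norm_num)).trans <| by
    rw [hmarginal 0 (by norm_num), ← hmarginal 9 (by norm_num), ← hprod 9 (by norm_num)]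
  rw [hjoint, hjoint, ENNReal.mul_left_inj (by simp) (by simp), Nat.cast_inj] at h09
  exact card_thousands_digit_three_hundreds_digit_zero_lt_nine.ne h09

/-- For `A, B, C, D` independent uniform on `{0,...,999}`, the hundreds digit `a1` of `A`
and the thousands digit `e0 = ⌊S/1000⌋` of `S = A + B + C + D` are not independent;
equivalently, their mutual information is strictly positive. -/
theorem hundreds_digit_dep_thousands_digit_of_sum
    {Ω : Type*} [MeasurableSpace Ω] (μ : Measure Ω) [IsProbabilityMeasure μ]
    (X : Fin 4 → Ω → ℕ)
    (hIndep : iIndepFun X μ)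
    (hMeas : ∀ i, Measurable (X i))
    (hVal : ∀ i ω, X i ω < 1000)
    (hUnif : ∀ i, ∀ k : ℕ, k < 1000 → μ {ω | X i ω = k} = 1 / 1000) :
    ¬ IndepFun (fun ω => X 0 ω / 100 % 10)
        (fun ω => (X 0 ω + X 1 ω + X 2 ω + X 3 ω) / 1000) μ
      ∧ 0 < mutualInfoNat μ (fun ω => X 0 ω / 100 % 10)
          (fun ω => (X 0 ω + X 1 ω + X 2 ω + X 3 ω) / 1000) 10 4 := by
  have hsum_lt (ω : Ω) : (X 0 ω + X 1 ω + X 2 ω + X 3 ω) / 1000 < 4 := by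
    have := hVal 0 ω; have := hVal 1 ω; have := hVal 2 ω; have := hVal 3 ω
    omega
  obtain ⟨d, hd, hne⟩ := exists_measure_hundreds_digit_inter_ne_mul μ X hIndep hMeas hVal hUnif
  refine ⟨fun h => hne ?_, mutualInfoNat_pos ?_ ?_ (fun ω => Nat.mod_lt _ (by norm_num))
    hsum_lt hd (by norm_num) hne⟩
  · exact h.measure_inter_preimage_eq_mul _ _ (measurableSet_singleton d) (measurableSet_singleton 3)
  · exact (Measurable.of_discrete (f := fun n : ℕ => n / 100 % 10)).comp (hMeas 0)
  · exact ((((hMeas 0).add (hMeas 1)).add (hMeas 2)).add (hMeas 3)).div_const _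
end

section
/- Let A, B, C, D be independent random variables uniformly distributed on {0,1,...,999}, let a3 be the units digit of A, and let e0 = floor((A+B+C+D)/1000). Then P(e0 >= 1 | a3 = 0) < P(e0 >= 1 | a3 = 9); in particular a3 and e0 are dependent. -/
open MeasureTheory ProbabilityTheory Finset
open scoped ENNReal

/-!
Write `S = B + C + D`, which is independent of `A`. Conditioning on the units digit of `A`,
`P(A + S ≥ 1000, A ≡ d mod 10)` is the sum over the `a ≡ d` of `P(A = a) P(S ≥ 1000 - a)`.
Pairing `a ≡ 0` with `a + 9 ≡ 9` compares the two sums term by term, and the term `a = 0`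
is strictly smaller because `S = 991` has positive probability. Independence would make the two
conditional probabilities equal.
-/

lemma Nat.filter_range_mod_eq_add_eq_image {m n d k : ℕ} (hmn : m ∣ n) (hdk : d + k < m) :
    (range n).filter (· % m = d + k) = ((range n).filter (· % m = d)).image (· + k) := by
  obtain ⟨r, rfl⟩ := hmn
  ext b
  simp only [mem_filter, mem_range, mem_image]
  constructor
  · rintro ⟨hb, hbm⟩
    have hb' : b = d + k + m * (b / m) := by have := Nat.mod_add_div b m; omega
    refine ⟨b - k, ⟨by omega, ?_⟩, by omega⟩
    rw [show b - k = d + m * (b / m) by omega, Nat.add_mul_mod_self_left,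
      Nat.mod_eq_of_lt (by omega)]
  · rintro ⟨a, ⟨ha, ham⟩, rfl⟩
    have ha' : a = d + m * (a / m) := by have := Nat.mod_add_div a m; omega
    have hq : a / m + 1 ≤ r := Nat.div_lt_of_lt_mul ha
    refine ⟨?_, ?_⟩
    · calc a + k < m * (a / m + 1) := by rw [Nat.mul_succ]; omega
        _ ≤ m * r := Nat.mul_le_mul_left m hq
    · rw [ha', add_right_comm, Nat.add_mul_mod_self_left, Nat.mod_eq_of_lt hdk]

namespace ProbabilityTheory

variable {Ω : Type*} [MeasurableSpace Ω] {μ : Measure Ω}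

lemma iIndepFun.measure_sum_preimage_ne_zero {ι β : Type*} [AddCommMonoid β]
    [MeasurableSpace β] [MeasurableSingletonClass β] {X : ι → Ω → β} (hX : iIndepFun X μ)
    (s : Finset ι) (c : ι → β) (hc : ∀ i ∈ s, μ (X i ⁻¹' {c i}) ≠ 0) :
    μ ((∑ i ∈ s, X i) ⁻¹' {∑ i ∈ s, c i}) ≠ 0 := by
  have hinter : μ (⋂ i ∈ s, X i ⁻¹' {c i}) ≠ 0 := by
    rw [hX.meas_biInter fun i _ => ⟨{c i}, measurableSet_singleton _, rfl⟩]
    exact prod_ne_zero_iff.2 hc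
  refine ne_bot_of_le_ne_bot hinter (measure_mono fun ω hω => ?_)
  simp only [Set.mem_iInter, Set.mem_preimage, Set.mem_singleton_iff] at hω
  simp only [Set.mem_preimage, Finset.sum_apply, Set.mem_singleton_iff]
  exact sum_congr rfl hω

lemma IndepFun.cond_preimage_eq {β γ : Type*} [MeasurableSpace β] [MeasurableSpace γ]
    [IsFiniteMeasure μ] {f : Ω → β} {g : Ω → γ} (hfg : IndepFun f g μ) (hf : Measurable f)
    {s : Set β} {t : Set γ} (hs : MeasurableSet s) (ht : MeasurableSet t)
    (h0 : μ (f ⁻¹' s) ≠ 0) :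
    μ[|f ⁻¹' s] (g ⁻¹' t) = μ (g ⁻¹' t) := by
  rw [cond_apply (hf hs), hfg.measure_inter_preimage_eq_mul s t hs ht,
    ENNReal.inv_mul_cancel_left h0 (measure_ne_top _ _)]

lemma not_indepFun_of_cond_lt_cond {β γ : Type*} [MeasurableSpace β] [MeasurableSpace γ]
    [IsFiniteMeasure μ] {f : Ω → β} {g : Ω → γ} (hf : Measurable f) {s s' : Set β} {t : Set γ}
    (hs : MeasurableSet s) (hs' : MeasurableSet s') (ht : MeasurableSet t)
    (h0 : μ (f ⁻¹' s) ≠ 0) (hlt : μ[|f ⁻¹' s] (g ⁻¹' t) < μ[|f ⁻¹' s'] (g ⁻¹' t)) :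
    ¬ IndepFun f g μ := by
  intro hfg
  have h0' : μ (f ⁻¹' s') ≠ 0 := fun h => by simp [cond_eq_zero_of_meas_eq_zero h] at hlt
  exact hlt.ne ((hfg.cond_preimage_eq hf hs ht h0).trans (hfg.cond_preimage_eq hf hs' ht h0').symm)

lemma cond_lt_cond_of_measure_eq [IsFiniteMeasure μ] {A B E : Set Ω} (hA : MeasurableSet A)
    (hB : MeasurableSet B) (hAB : μ A = μ B) (hA0 : μ A ≠ 0) (h : μ (A ∩ E) < μ (B ∩ E)) :
    μ[|A] E < μ[|B] E := by
  rw [cond_apply hA, cond_apply hB, ← hAB]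
  exact ENNReal.mul_lt_mul_right (ENNReal.inv_ne_zero.2 (measure_ne_top _ _))
    (ENNReal.inv_ne_top.2 hA0) h

variable {Y S : Ω → ℕ}

lemma measure_le_add_lt_measure_le_add [IsFiniteMeasure μ] (hS : Measurable S) {t a b m : ℕ}
    (ha : m + a < t) (hb : t ≤ m + b) (hm : μ (S ⁻¹' {m}) ≠ 0) :
    μ {ω | t ≤ a + S ω} < μ {ω | t ≤ b + S ω} := by
  have hsub : {ω | t ≤ a + S ω} ⊆ {ω | t ≤ b + S ω} := fun ω (h : t ≤ a + S ω) =>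
    show t ≤ b + S ω by omega
  have hgap : μ ({ω | t ≤ b + S ω} \ {ω | t ≤ a + S ω}) ≠ 0 :=
    ne_bot_of_le_ne_bot hm <| measure_mono fun ω (h : S ω = m) =>
      ⟨show t ≤ b + S ω by omega, show ¬ t ≤ a + S ω by omega⟩
  calc μ {ω | t ≤ a + S ω}
      < μ {ω | t ≤ a + S ω} + μ ({ω | t ≤ b + S ω} \ {ω | t ≤ a + S ω}) :=
        ENNReal.lt_add_right (measure_ne_top _ _) hgap
    _ = μ {ω | t ≤ b + S ω} := by
        rw [measure_add_sdiff (measurableSet_le measurable_const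
          (hS.const_add a)).nullMeasurableSet, Set.union_eq_self_of_subset_left hsub]

lemma measure_preimage_image_add (hY : Measurable Y) {s : Finset ℕ} {k : ℕ}
    (hshift : ∀ a ∈ s, μ (Y ⁻¹' {a + k}) = μ (Y ⁻¹' {a})) :
    μ (Y ⁻¹' (s.image (· + k))) = μ (Y ⁻¹' s) := by
  rw [← sum_measure_preimage_singleton _ fun a _ => hY (measurableSet_singleton a),
    ← sum_measure_preimage_singleton _ fun a _ => hY (measurableSet_singleton a),
    sum_image fun a _ b _ => Nat.add_right_cancel]
  exact sum_congr rfl hshift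

lemma IndepFun.measure_preimage_inter_le_add_eq_sum (hYS : IndepFun Y S μ) (hY : Measurable Y)
    (s : Finset ℕ) (t : ℕ) :
    μ (Y ⁻¹' s ∩ {ω | t ≤ Y ω + S ω}) = ∑ a ∈ s, μ (Y ⁻¹' {a}) * μ {ω | t ≤ a + S ω} := by
  rw [← Measure.restrict_apply (hY s.measurableSet),
    ← sum_measure_preimage_singleton _ fun a _ => hY (measurableSet_singleton a)]
  refine sum_congr rfl fun a _ => ?_
  have hfiber : Y ⁻¹' {a} ∩ {ω | t ≤ Y ω + S ω} = Y ⁻¹' {a} ∩ S ⁻¹' {n | t ≤ a + n} :=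
    Set.ext fun ω => and_congr_right fun (h : Y ω = a) => by rw [← h]; rfl
  rw [Measure.restrict_apply (hY (measurableSet_singleton a)), hfiber,
    hYS.measure_inter_preimage_eq_mul _ _ (measurableSet_singleton a) (.of_discrete)]
  rfl

lemma IndepFun.measure_preimage_inter_le_add_lt_image_add [IsFiniteMeasure μ]
    (hYS : IndepFun Y S μ) (hY : Measurable Y) {s : Finset ℕ} {k t a₀ : ℕ}
    (hshift : ∀ a ∈ s, μ (Y ⁻¹' {a + k}) = μ (Y ⁻¹' {a})) (ha₀ : a₀ ∈ s)
    (hY₀ : μ (Y ⁻¹' {a₀}) ≠ 0) (hlt : μ {ω | t ≤ a₀ + S ω} < μ {ω | t ≤ a₀ + k + S ω}) :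
    μ (Y ⁻¹' s ∩ {ω | t ≤ Y ω + S ω})
      < μ (Y ⁻¹' (s.image (· + k)) ∩ {ω | t ≤ Y ω + S ω}) := by
  rw [hYS.measure_preimage_inter_le_add_eq_sum hY, hYS.measure_preimage_inter_le_add_eq_sum hY,
    sum_image fun a _ b _ => Nat.add_right_cancel, ← add_sum_erase _ _ ha₀,
    ← add_sum_erase _ _ ha₀, hshift a₀ ha₀]
  refine ENNReal.add_lt_add_of_lt_of_le ?_ (ENNReal.mul_lt_mul_right hY₀ (measure_ne_top _ _) hlt)
    (sum_le_sum fun a ha => ?_)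
  · exact ENNReal.sum_ne_top.2 fun a _ => ENNReal.mul_ne_top (measure_ne_top _ _)
      (measure_ne_top _ _)
  · rw [hshift a (mem_of_mem_erase ha)]
    exact mul_le_mul_right (measure_mono fun ω (h : t ≤ a + S ω) =>
      show t ≤ a + k + S ω by omega) _

lemma IndepFun.cond_le_add_lt_cond_image_add [IsFiniteMeasure μ] (hYS : IndepFun Y S μ)
    (hY : Measurable Y) {s : Finset ℕ} {k t a₀ : ℕ}
    (hshift : ∀ a ∈ s, μ (Y ⁻¹' {a + k}) = μ (Y ⁻¹' {a})) (ha₀ : a₀ ∈ s)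
    (hY₀ : μ (Y ⁻¹' {a₀}) ≠ 0) (hlt : μ {ω | t ≤ a₀ + S ω} < μ {ω | t ≤ a₀ + k + S ω}) :
    μ[|Y ⁻¹' s] {ω | t ≤ Y ω + S ω} < μ[|Y ⁻¹' (s.image (· + k))] {ω | t ≤ Y ω + S ω} :=
  cond_lt_cond_of_measure_eq (hY s.measurableSet) (hY (s.image _).measurableSet)
    (measure_preimage_image_add hY hshift).symm
    (ne_bot_of_le_ne_bot hY₀ (measure_mono (Set.preimage_mono (by simpa using ha₀))))
    (hYS.measure_preimage_inter_le_add_lt_image_add hY hshift ha₀ hY₀ hlt)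

lemma IndepFun.cond_mod_eq_lt_cond_mod_eq_add [IsFiniteMeasure μ] (hYS : IndepFun Y S μ)
    (hY : Measurable Y) {m n d k t : ℕ} {c : ℝ≥0∞} (hmn : m ∣ n) (hn : 0 < n)
    (hdk : d + k < m) (hYn : ∀ ω, Y ω < n) (hunif : ∀ a < n, μ (Y ⁻¹' {a}) = c) (hc : c ≠ 0)
    (hlt : μ {ω | t ≤ d + S ω} < μ {ω | t ≤ d + k + S ω}) :
    μ[|{ω | Y ω % m = d}] {ω | t ≤ Y ω + S ω}
      < μ[|{ω | Y ω % m = d + k}] {ω | t ≤ Y ω + S ω} := by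
  have hdigit : ∀ e, {ω | Y ω % m = e} = Y ⁻¹' ↑((range n).filter (· % m = e)) := fun e =>
    Set.ext fun ω => by simp [hYn ω]
  have hdn : d < n := (Nat.le_of_dvd hn hmn).trans_lt' (by omega)
  rw [hdigit, hdigit, Nat.filter_range_mod_eq_add_eq_image hmn hdk]
  refine hYS.cond_le_add_lt_cond_image_add hY (fun a ha => ?_) (a₀ := d) ?_ ?_ hlt
  · have hak := mem_image_of_mem (· + k) ha
    rw [← Nat.filter_range_mod_eq_add_eq_image hmn hdk, mem_filter, mem_range] at hak
    rw [hunif _ hak.1, hunif _ (mem_range.1 (mem_filter.1 ha).1)]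
  · simp [hdn, Nat.mod_eq_of_lt (show d < m by omega)]
  · rwa [hunif d hdn]

end ProbabilityTheory

/-- For `A, B, C, D` independent uniform on `{0,...,999}`, with `a3 = A % 10` the units digit
of `A` and `e0 = ⌊(A+B+C+D)/1000⌋`, we have `P(e0 ≥ 1 | a3 = 0) < P(e0 ≥ 1 | a3 = 9)`;
in particular `a3` and `e0` are dependent. -/
theorem units_digit_dep_thousands_digit_of_sum
    {Ω : Type*} [MeasurableSpace Ω] (μ : Measure Ω) [IsProbabilityMeasure μ]
    (X : Fin 4 → Ω → ℕ)
    (hIndep : iIndepFun X μ)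
    (hMeas : ∀ i, Measurable (X i))
    (hVal : ∀ i ω, X i ω < 1000)
    (hUnif : ∀ i, ∀ k : ℕ, k < 1000 → μ {ω | X i ω = k} = 1 / 1000) :
    μ[|{ω | X 0 ω % 10 = 0}] {ω | 1 ≤ (X 0 ω + X 1 ω + X 2 ω + X 3 ω) / 1000}
        < μ[|{ω | X 0 ω % 10 = 9}] {ω | 1 ≤ (X 0 ω + X 1 ω + X 2 ω + X 3 ω) / 1000}
      ∧ ¬ IndepFun (fun ω => X 0 ω % 10)
          (fun ω => (X 0 ω + X 1 ω + X 2 ω + X 3 ω) / 1000) μ := by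
  set S : Ω → ℕ := ∑ j ∈ ({1, 2, 3} : Finset (Fin 4)), X j
  have hS : ∀ ω, S ω = X 1 ω + X 2 ω + X 3 ω := fun ω => by simp [S, add_assoc]
  have hind : IndepFun (X 0) S μ := (hIndep.indepFun_finsetSum_of_notMem hMeas (by decide)).symm
  have hS₉₉₁ : μ (S ⁻¹' {991}) ≠ 0 :=
    hIndep.measure_sum_preimage_ne_zero _ ![0, 991, 0, 0] fun i _ =>
      (hUnif i _ (by fin_cases i <;> decide)).trans_ne (by norm_num)
  have hsum : {ω | 1 ≤ (X 0 ω + X 1 ω + X 2 ω + X 3 ω) / 1000} = {ω | 1000 ≤ X 0 ω + S ω} := by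
    ext ω
    simp only [Set.mem_ofPred_eq, hS]
    omega
  have hcond : μ[|{ω | X 0 ω % 10 = 0}] {ω | 1 ≤ (X 0 ω + X 1 ω + X 2 ω + X 3 ω) / 1000}
      < μ[|{ω | X 0 ω % 10 = 9}] {ω | 1 ≤ (X 0 ω + X 1 ω + X 2 ω + X 3 ω) / 1000} := by
    rw [hsum]
    exact hind.cond_mod_eq_lt_cond_mod_eq_add (hMeas 0) (d := 0) (k := 9) (by norm_num)
      (by norm_num) (by norm_num) (hVal 0) (hUnif 0) (by norm_num)
      (measure_le_add_lt_measure_le_add (by fun_prop) (by norm_num) (by norm_num) hS₉₉₁)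
  refine ⟨hcond, not_indepFun_of_cond_lt_cond ((measurable_from_nat (f := (· % 10))).comp (hMeas 0))
    (measurableSet_singleton 0) (measurableSet_singleton 9) .of_discrete ?_ hcond⟩
  exact ne_bot_of_le_ne_bot ((hUnif 0 0 (by norm_num)).trans_ne (by norm_num))
    (measure_mono fun ω (h : X 0 ω = 0) => show X 0 ω % 10 = 0 by rw [h])
end

section
/- Let A, B, C, D be independent random variables uniformly distributed on {0,1,...,999}. For each digit place i in {1,2,3} (hundreds, tens, units of the addends), let e_i denote the corresponding digit of S = A + B + C + D (so e_1 is the hundreds digit of S, e_2 the tens digit, e_3 the units digit), and let a_i denote the corresponding digit of A. Then a_i and e_i are independent for each i in {1,2,3}. -/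
/-!
Let `d = 10 ^ (3 - i)`. Since `10 d ∣ 1000`, the digit of `S` at place `d` only depends on
`S mod 1000 = B + (A + C + D) mod 1000`. Modulo `1000`, `B` is uniform on `ZMod 1000` and
independent of `(A, C, D)`; translating a uniform variable by a function of an independent one
leaves it uniform and independent of that one. So `S mod 1000` is independent of `(A, C, D)`,
in particular of `A`, and hence so are the digits of `A` and of `S`.
-/

open MeasureTheory ProbabilityTheory

theorem ZMod.val_natCast_div_mod {m d k : ℕ} (h : d * k ∣ m) (n : ℕ) :
    (n : ZMod m).val / d % k = n / d % k := by
  rw [ZMod.val_natCast, ← Nat.mod_mul_right_div_self, Nat.mod_mod_of_dvd _ h,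
    Nat.mod_mul_right_div_self]

theorem ZMod.natCast_eq_iff_of_lt {m n : ℕ} (hn : n < m) (g : ZMod m) :
    (n : ZMod m) = g ↔ n = g.val := by
  constructor
  · rintro rfl
    exact (ZMod.val_cast_of_lt hn).symm
  · rintro rfl
    have : NeZero m := ⟨by omega⟩
    exact ZMod.natCast_zmod_val g

theorem MeasureTheory.Measure.isAddRightInvariant_map_of_measure_eq_const
    {Ω G : Type*} [MeasurableSpace Ω] {μ : Measure Ω}
    [AddGroup G] [Countable G] [MeasurableSpace G] [MeasurableSingletonClass G]
    {U : Ω → G} (hU : Measurable U) {c : ENNReal} (h : ∀ g, μ {ω | U ω = g} = c) :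
    (μ.map U).IsAddRightInvariant := by
  refine ⟨fun g => Measure.ext_iff_singleton.mpr fun x => ?_⟩
  have hpre : (· + g) ⁻¹' {x} = {x - g} := by
    ext y
    simp [sub_eq_add_neg, eq_add_neg_iff_add_eq]
  rw [map_apply .of_discrete (measurableSet_singleton x), hpre,
    map_apply hU (measurableSet_singleton _), map_apply hU (measurableSet_singleton _)]
  exact (h _).trans (h _).symm

-- The shear `(y, u) ↦ (y, u + f y)` preserves `law Y ⊗ law U`.
theorem ProbabilityTheory.IndepFun.indepFun_add_comp
    {Ω β G : Type*} [MeasurableSpace Ω] {μ : Measure Ω} [IsProbabilityMeasure μ]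
    [MeasurableSpace β] [Add G] [MeasurableSpace G] [MeasurableAdd₂ G]
    {Y : Ω → β} {U : Ω → G} {f : β → G}
    (hYU : IndepFun Y U μ) (hY : Measurable Y) (hU : Measurable U) (hf : Measurable f)
    [(μ.map U).IsAddRightInvariant] :
    IndepFun Y (fun ω => U ω + f (Y ω)) μ := by
  have hV : Measurable fun ω => U ω + f (Y ω) := hU.add (hf.comp hY)
  have hshear : MeasurePreserving (fun p : β × G => (p.1, p.2 + f p.1))
      ((μ.map Y).prod (μ.map U)) ((μ.map Y).prod (μ.map U)) :=
    (MeasurePreserving.id _).skew_product (measurable_snd.add (hf.comp measurable_fst))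
      (ae_of_all _ fun y => map_add_right_eq_self _ (f y))
  have hjoint : μ.map (fun ω => (Y ω, U ω + f (Y ω))) = (μ.map Y).prod (μ.map U) := by
    rw [← hshear.map_eq, ← hYU.map_prod_eq_prod_map_map hY.aemeasurable hU.aemeasurable,
      Measure.map_map hshear.measurable (hY.prodMk hU)]
    rfl
  have hshift : μ.map (fun ω => U ω + f (Y ω)) = μ.map U := by
    have := congrArg (Measure.map Prod.snd) hjoint
    rwa [Measure.map_map measurable_snd (hY.prodMk hV), Measure.map_snd_prod,
      Measure.map_apply hY .univ, Set.preimage_univ, measure_univ, one_smul] at this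
  rw [indepFun_iff_map_prod_eq_prod_map_map hY.aemeasurable hV.aemeasurable, hjoint, hshift]

/-- For `A, B, C, D` independent uniform on `{0,...,999}` and `S = A+B+C+D`, for each
`i ∈ {1,2,3}` (hundreds, tens, units places, i.e. digit at place `10^(3-i)`), the digit
`a_i` of `A` and the digit `e_i` of `S` at that place are independent. -/
theorem digit_of_addend_indep_same_digit_of_sum
    {Ω : Type*} [MeasurableSpace Ω] (μ : Measure Ω) [IsProbabilityMeasure μ]
    (X : Fin 4 → Ω → ℕ)
    (hIndep : iIndepFun X μ)
    (hMeas : ∀ i, Measurable (X i))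
    (hVal : ∀ i ω, X i ω < 1000)
    (hUnif : ∀ i, ∀ k : ℕ, k < 1000 → μ {ω | X i ω = k} = 1 / 1000) :
    ∀ i : ℕ, i ∈ ({1, 2, 3} : Set ℕ) →
      IndepFun (fun ω => X 0 ω / 10 ^ (3 - i) % 10)
        (fun ω => (X 0 ω + X 1 ω + X 2 ω + X 3 ω) / 10 ^ (3 - i) % 10) μ := by
  intro i hi
  have hdvd : 10 ^ (3 - i) * 10 ∣ 1000 := by
    rcases hi with rfl | rfl | rfl <;> norm_num
  have hACD_B : IndepFun (fun ω (j : ({0, 2, 3} : Finset (Fin 4))) => X j ω)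
      (fun ω => (X 1 ω : ZMod 1000)) μ :=
    (hIndep.indepFun_finset {0, 2, 3} {1} (by decide) hMeas).comp measurable_id
      (Measurable.of_discrete
        (f := fun r => ((r ⟨1, Finset.mem_singleton_self 1⟩ : ℕ) : ZMod 1000)))
  have hB : (μ.map fun ω => (X 1 ω : ZMod 1000)).IsAddRightInvariant :=
    Measure.isAddRightInvariant_map_of_measure_eq_const (Measurable.of_discrete.comp (hMeas 1))
      fun g => by
        simp_rw [ZMod.natCast_eq_iff_of_lt (hVal 1 _)]
        exact hUnif 1 g.val (ZMod.val_lt g)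
  have hACD_S := hACD_B.indepFun_add_comp (measurable_pi_lambda _ fun j => hMeas j)
    (Measurable.of_discrete.comp (hMeas 1))
    (Measurable.of_discrete (f := fun r : ({0, 2, 3} : Finset (Fin 4)) → ℕ =>
      ((r ⟨0, by decide⟩ + r ⟨2, by decide⟩ + r ⟨3, by decide⟩ : ℕ) : ZMod 1000)))
  convert hACD_S.comp
    (Measurable.of_discrete (f := fun r => r ⟨0, by decide⟩ / 10 ^ (3 - i) % 10))
    (Measurable.of_discrete (f := fun g : ZMod 1000 => g.val / 10 ^ (3 - i) % 10)) using 1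
  · rfl
  funext ω
  show _ = ((X 1 ω : ZMod 1000) + ((X 0 ω + X 2 ω + X 3 ω : ℕ) : ZMod 1000)).val / _ % 10
  rw [← Nat.cast_add, ZMod.val_natCast_div_mod hdvd]
  congr 2
  ring
end

section
/- Let A, B, C, D be independent random variables uniformly distributed on {0,1,...,999} and S = A + B + C + D. Let a1 be the hundreds digit of A and e2 the tens digit of S, and let a2 be the tens digit of A and e3 the units digit of S. Then a1 is independent of e2, a1 is independent of e3, and a2 is independent of e3. -/
/-!
Write `A = d * (A / d) + A % d` with `d = 100` or `d = 10`. For `A` uniform on `{0, …, 999}`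
the joint law of `(A / d, A % d)` has product form, so `A / d` is independent of `A % d`; as `A`
is independent of `B + C + D`, the block `A / d` is even independent of `(A % d, B + C + D)`.
The digits of `S` at places below `d` are functions of `A % d` and `B + C + D` alone.
-/

open MeasureTheory ProbabilityTheory
open scoped ENNReal

theorem Nat.div_eq_and_mod_eq_iff {n d e q r : ℕ} (hn : n < d * e) :
    n / d = q ∧ n % d = r ↔ q < e ∧ r < d ∧ n = d * q + r := by
  have hd : 0 < d := Nat.pos_of_ne_zero (by rintro rfl; simp at hn)
  constructor
  · rintro ⟨rfl, rfl⟩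
    exact ⟨Nat.div_lt_of_lt_mul hn, Nat.mod_lt n hd, (Nat.div_add_mod n d).symm⟩
  · rintro ⟨-, hr, rfl⟩
    exact ⟨by rw [Nat.mul_add_div hd, Nat.div_eq_of_lt hr, add_zero],
      by rw [Nat.mul_add_mod, Nat.mod_eq_of_lt hr]⟩

theorem Nat.add_div_mod_eq_mod_add_div_mod {a b n m k : ℕ} (h : m * k ∣ n) :
    (a + b) / m % k = (a % n + b) / m % k := by
  rw [← Nat.mod_mul_right_div_self, ← Nat.mod_mul_right_div_self (a % n + b),
    Nat.add_mod (a % n), Nat.mod_mod_of_dvd a h, ← Nat.add_mod]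

section Countable

variable {Ω α β : Type*} [MeasurableSpace Ω] {μ : Measure Ω}
  [MeasurableSpace α] [MeasurableSingletonClass α] [Countable α]
  [MeasurableSpace β] [MeasurableSingletonClass β] [Countable β]
  {f : Ω → α} {g : Ω → β}

theorem MeasureTheory.measure_eq_tsum_measure_inter_preimage_singleton (hg : Measurable g)
    (s : Set Ω) : μ s = ∑' b, μ (s ∩ g ⁻¹' {b}) := by
  rw [← Measure.restrict_apply_univ, ← Set.preimage_univ (f := g),
    ← tsum_measure_preimage_singleton Set.countable_univ fun b _ => hg (.singleton b),
    tsum_univ (f := fun b => μ.restrict s (g ⁻¹' {b}))]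
  simp_rw [Measure.restrict_apply (hg (.singleton _)), Set.inter_comm]

namespace ProbabilityTheory

theorem indepFun_iff_measure_inter_preimage_singleton_eq_mul [IsFiniteMeasure μ]
    (hf : Measurable f) (hg : Measurable g) :
    IndepFun f g μ ↔
      ∀ a b, μ (f ⁻¹' {a} ∩ g ⁻¹' {b}) = μ (f ⁻¹' {a}) * μ (g ⁻¹' {b}) := by
  refine ⟨fun h a b => h.measure_inter_preimage_eq_mul _ _ (.singleton a) (.singleton b),
    fun h => ?_⟩
  rw [indepFun_iff_map_prod_eq_prod_map_map hf.aemeasurable hg.aemeasurable]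
  refine Measure.ext_of_singleton fun ⟨a, b⟩ => ?_
  rw [← Set.singleton_prod_singleton, Measure.prod_prod, Measure.map_apply (hf.prodMk hg)
    ((MeasurableSet.singleton a).prod (.singleton b)), Measure.map_apply hf (.singleton a),
    Measure.map_apply hg (.singleton b), Set.mk_preimage_prod, h]

theorem indepFun_of_measure_inter_preimage_singleton_eq_mul [IsProbabilityMeasure μ]
    (hf : Measurable f) (hg : Measurable g) (φ : α → ℝ≥0∞) (ψ : β → ℝ≥0∞)
    (h : ∀ a b, μ (f ⁻¹' {a} ∩ g ⁻¹' {b}) = φ a * ψ b) :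
    IndepFun f g μ := by
  have hfa a : μ (f ⁻¹' {a}) = φ a * ∑' b, ψ b := by
    rw [measure_eq_tsum_measure_inter_preimage_singleton hg, ENNReal.tsum_mul_left.symm]
    simp_rw [h]
  have hgb b : μ (g ⁻¹' {b}) = (∑' a, φ a) * ψ b := by
    rw [measure_eq_tsum_measure_inter_preimage_singleton hf, ENNReal.tsum_mul_right.symm]
    simp_rw [Set.inter_comm, h]
  have htot : (∑' a, φ a) * ∑' b, ψ b = 1 := by
    rw [← measure_univ (μ := μ), measure_eq_tsum_measure_inter_preimage_singleton hf,
      ← ENNReal.tsum_mul_right]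
    simp_rw [Set.univ_inter, hfa]
  rw [indepFun_iff_measure_inter_preimage_singleton_eq_mul hf hg]
  intro a b
  rw [h, hfa, hgb]
  calc φ a * ψ b = φ a * ψ b * ((∑' a, φ a) * ∑' b, ψ b) := by rw [htot, mul_one]
    _ = _ := by ring

end ProbabilityTheory

end Countable

namespace ProbabilityTheory

variable {Ω : Type*} [MeasurableSpace Ω] {μ : Measure Ω} [IsProbabilityMeasure μ]

theorem IndepFun.indepFun_prodMk_of_indepFun_comp {α β β' γ : Type*} [MeasurableSpace α]
    [MeasurableSpace β] [MeasurableSpace β'] [MeasurableSpace γ]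
    {Y : Ω → α} {Z : Ω → γ} {u : α → β} {v : α → β'}
    (hY : Measurable Y) (hZ : Measurable Z) (hu : Measurable u) (hv : Measurable v)
    (hYZ : IndepFun Y Z μ) (huv : IndepFun (fun ω => u (Y ω)) (fun ω => v (Y ω)) μ) :
    IndepFun (fun ω => u (Y ω)) (fun ω => (v (Y ω), Z ω)) μ := by
  have hvZ : IndepFun (fun ω => v (Y ω)) Z μ := hYZ.comp hv measurable_id
  rw [indepFun_iff_map_prod_eq_prod_map_map (by fun_prop) (by fun_prop)] at hYZ huv hvZ ⊢
  calc μ.map (fun ω => (u (Y ω), v (Y ω), Z ω))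
      = ((μ.map fun ω => (Y ω, Z ω)).map (Prod.map (fun a => (u a, v a)) id)).map
          MeasurableEquiv.prodAssoc := by
        rw [Measure.map_map (by fun_prop) (by fun_prop),
          Measure.map_map (by fun_prop) (by fun_prop)]
        rfl
    _ = (((μ.map fun ω => u (Y ω)).prod (μ.map fun ω => v (Y ω))).prod (μ.map Z)).map
          MeasurableEquiv.prodAssoc := by
        rw [hYZ, ← Measure.map_prod_map _ _ (by fun_prop) measurable_id, Measure.map_id,
          Measure.map_map (by fun_prop) hY, ← huv]
        rfl
    _ = (μ.map fun ω => u (Y ω)).prod (μ.map fun ω => (v (Y ω), Z ω)) := by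
        rw [hvZ, (measurePreserving_prodAssoc _ _ _).map_eq]

theorem indepFun_div_mod_of_measure_preimage_singleton_eq {X : Ω → ℕ} (hX : Measurable X)
    {d e : ℕ} {c : ℝ≥0∞} (hlt : ∀ ω, X ω < d * e)
    (hunif : ∀ k < d * e, μ (X ⁻¹' {k}) = c) :
    IndepFun (fun ω => X ω / d) (fun ω => X ω % d) μ := by
  refine indepFun_of_measure_inter_preimage_singleton_eq_mul (by fun_prop) (by fun_prop)
    (fun q => if q < e then c else 0) (fun r => if r < d then 1 else 0) fun q r => ?_
  have hset : (fun ω => X ω / d) ⁻¹' {q} ∩ (fun ω => X ω % d) ⁻¹' {r} =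
      {ω | q < e ∧ r < d ∧ X ω = d * q + r} := by
    ext ω
    exact Nat.div_eq_and_mod_eq_iff (hlt ω)
  rw [hset]
  by_cases hqr : q < e ∧ r < d
  · simp only [hqr, true_and, if_true, mul_one]
    exact hunif _ (by nlinarith)
  · rcases not_and_or.1 hqr with hq | hr
    · simp [hq]
    · simp [hr]

theorem IndepFun.indepFun_div_mod_add_div_mod {X Z : Ω → ℕ} (hX : Measurable X)
    (hZ : Measurable Z) (hXZ : IndepFun X Z μ) {d e : ℕ} {c : ℝ≥0∞}
    (hlt : ∀ ω, X ω < d * e) (hunif : ∀ k < d * e, μ (X ⁻¹' {k}) = c) {m k : ℕ}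
    (hmk : m * k ∣ d) (b : ℕ) :
    IndepFun (fun ω => X ω / d % b) (fun ω => (X ω + Z ω) / m % k) μ := by
  have h := (hXZ.indepFun_prodMk_of_indepFun_comp hX hZ (measurable_of_countable (· / d))
    (measurable_of_countable (· % d))
    (indepFun_div_mod_of_measure_preimage_singleton_eq hX hlt hunif)).comp
    (measurable_of_countable (· % b))
    (measurable_of_countable fun p : ℕ × ℕ => (p.1 + p.2) / m % k)
  simpa only [Function.comp_def, ← Nat.add_div_mod_eq_mod_add_div_mod hmk] using h

end ProbabilityTheory

/-- For `A, B, C, D` independent uniform on `{0,...,999}` and `S = A+B+C+D`: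
the hundreds digit `a1` of `A` is independent of the tens digit `e2` of `S`,
`a1` is independent of the units digit `e3` of `S`, and the tens digit `a2` of `A`
is independent of `e3`. -/
theorem higher_digit_indep_lower_digit_of_sum
    {Ω : Type*} [MeasurableSpace Ω] (μ : Measure Ω) [IsProbabilityMeasure μ]
    (X : Fin 4 → Ω → ℕ)
    (hIndep : iIndepFun X μ)
    (hMeas : ∀ i, Measurable (X i))
    (hVal : ∀ i ω, X i ω < 1000)
    (hUnif : ∀ i, ∀ k : ℕ, k < 1000 → μ {ω | X i ω = k} = 1 / 1000) :
    IndepFun (fun ω => X 0 ω / 100 % 10)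
        (fun ω => (X 0 ω + X 1 ω + X 2 ω + X 3 ω) / 10 % 10) μ
      ∧ IndepFun (fun ω => X 0 ω / 100 % 10)
          (fun ω => (X 0 ω + X 1 ω + X 2 ω + X 3 ω) % 10) μ
      ∧ IndepFun (fun ω => X 0 ω / 10 % 10)
          (fun ω => (X 0 ω + X 1 ω + X 2 ω + X 3 ω) % 10) μ := by
  have hrest : IndepFun (X 0) (fun ω => X 1 ω + X 2 ω + X 3 ω) μ := by
    convert (hIndep.indepFun_finsetSum_of_notMem hMeas (s := {1, 2, 3}) (i := 0) (by decide)).symm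
      using 1
    ext ω
    simp [Finset.sum_insert, add_assoc]
  have hdigit : ∀ d e m, d * e = 1000 → m * 10 ∣ d →
      IndepFun (fun ω => X 0 ω / d % 10)
        (fun ω => (X 0 ω + X 1 ω + X 2 ω + X 3 ω) / m % 10) μ := by
    intro d e m hde hmd
    simpa only [add_assoc] using hrest.indepFun_div_mod_add_div_mod (hMeas 0) (by fun_prop)
      (hde ▸ hVal 0) (fun k hk => hUnif 0 k (hde ▸ hk)) hmd 10
  exact ⟨hdigit 100 10 10 rfl (by norm_num), by simpa using hdigit 100 10 1 rfl (by norm_num),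
    by simpa using hdigit 10 100 1 rfl (by norm_num)⟩
end

section
/- Let A, B, C, D be independent random variables uniformly distributed on {0,1,...,999}, S = A+B+C+D. For i in {1,2,3}, let a_i, b_i, c_i, d_i be the digits of A, B, C, D at place 10^(3-i), let C_in be the carry into that place from the addition of the lower-order digits of A, B, C, D (with C_in = 0 for the units place), let e_i = (a_i + b_i + c_i + d_i + C_in) mod 10 and let K = floor((a_i + b_i + c_i + d_i + C_in)/10) be the carry out. Then the conditional mutual information I(a_i; e_i | K) is strictly positive. -/
open MeasureTheory ProbabilityTheory Finset

/-- Conditional mutual information `I(X;Y | Z)` for a conditioning variable `Z` with values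
in `{0,...,nz-1}`: the `P(Z = z)`-weighted average of the mutual information of `X` and `Y`
under the conditional measure given `{Z = z}`. -/
noncomputable def condMutualInfoNat {Ω : Type*} [MeasurableSpace Ω] (μ : Measure Ω)
    (X Y Z : Ω → ℕ) (nx ny nz : ℕ) : ℝ :=
  ∑ z ∈ range nz,
    (μ {ω | Z ω = z}).toReal * mutualInfoNat (μ[|{ω | Z ω = z}]) X Y nx ny


lemma gibbs_term {p q : ℝ} (hp : 0 ≤ p) (hq : 0 ≤ q) (hpq : p ≠ 0 → q ≠ 0) :
    p - q ≤ p * Real.log (p / q) := by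
  rcases eq_or_lt_of_le hp with h | hp'
  · simp [← h, hq]
  · have hq' : 0 < q := (hpq hp'.ne').lt_of_le' hq
    have h1 : Real.log (q / p) ≤ q / p - 1 := Real.log_le_sub_one_of_pos (by positivity)
    have h2 : Real.log (q / p) = - Real.log (p / q) := by
      rw [← Real.log_inv, inv_div]
    have h3 : q / p * p = q := div_mul_cancel₀ q hp'.ne'
    nlinarith [hp', h1, h2, h3]

lemma gibbs_term_strict {p q : ℝ} (hp : 0 ≤ p) (hq : 0 ≤ q) (hpq : p ≠ 0 → q ≠ 0)
    (hne : p ≠ q) : p - q < p * Real.log (p / q) := by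
  rcases eq_or_lt_of_le hp with h | hp'
  · have hq' : 0 < q := lt_of_le_of_ne hq (by intro h0; exact hne (by rw [← h, ← h0]))
    simp only [← h, zero_mul, zero_sub, zero_div]
    linarith
  · have hq' : 0 < q := (hpq hp'.ne').lt_of_le' hq
    have h1 : Real.log (q / p) < q / p - 1 :=
      Real.log_lt_sub_one_of_pos (by positivity) (by
        intro h; apply hne; field_simp at h; linarith)
    have h2 : Real.log (q / p) = - Real.log (p / q) := by
      rw [← Real.log_inv, inv_div]
    have h3 : q / p * p = q := div_mul_cancel₀ q hp'.ne'
    nlinarith [hp', h1, h2, h3]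

lemma sum_meas_inter {Ω : Type*} [MeasurableSpace Ω] (ν : Measure Ω) {Y : Ω → ℕ}
    (hY : Measurable Y) {n : ℕ} (hv : ∀ ω, Y ω < n) {t : Set Ω} (ht : MeasurableSet t) :
    ∑ y ∈ range n, ν (t ∩ {ω | Y ω = y}) = ν t := by
  rw [← measure_biUnion_finset]
  · congr 1
    ext ω
    simp only [Set.mem_iUnion, Set.mem_inter_iff, Set.mem_setOf_eq, mem_range, exists_prop]
    exact ⟨fun ⟨y, _, h, _⟩ => h, fun h => ⟨Y ω, hv ω, h, rfl⟩⟩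
  · intro y1 _ y2 _ hne
    simp only [Function.onFun]
    apply Set.disjoint_left.2
    rintro ω ⟨-, h1⟩ ⟨-, h2⟩
    simp only [Set.mem_setOf_eq] at h1 h2
    exact hne (h1 ▸ h2 ▸ rfl)
  · exact fun y _ => ht.inter (hY (measurableSet_singleton y))


lemma arith1 (a b c d cin : ℕ) (hA : a = 9) (hK : (a+b+c+d+cin)/10 = 0)
    (hE : (a+b+c+d+cin)%10 = 0) : False := by omega

lemma prod_event_ne_zero {Ω : Type*} [MeasurableSpace Ω] (μ : Measure Ω)
    [IsProbabilityMeasure μ] (X : Fin 4 → Ω → ℕ)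
    (hIndep : iIndepFun X μ)
    (hUnif : ∀ i, ∀ k : ℕ, k < 1000 → μ {ω | X i ω = k} = 1 / 1000)
    (v : Fin 4 → ℕ) (hv : ∀ j, v j < 1000) :
    μ {ω | ∀ j, X j ω = v j} ≠ 0 := by
  have h := hIndep.measure_inter_preimage_eq_mul (S := Finset.univ)
    (sets := fun j => {v j}) (fun j _ => measurableSet_singleton _)
  have hset : (⋂ j ∈ Finset.univ, X j ⁻¹' {v j}) = {ω | ∀ j, X j ω = v j} := by
    ext ω; simp [Set.mem_iInter]
  rw [hset] at h
  rw [h]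
  have hu : ∀ j : Fin 4, μ (X j ⁻¹' {v j}) = 1/1000 := fun j => hUnif j (v j) (hv j)
  simp only [hu, Finset.prod_const, Finset.card_univ, Fintype.card_fin]
  intro hcontra
  have := pow_eq_zero_iff (n := 4) (by norm_num) |>.1 hcontra
  simp [ENNReal.div_eq_zero_iff] at this
section Gibbs
variable {Ω : Type*} [MeasurableSpace Ω] (ν : Measure Ω) [IsProbabilityMeasure ν]
  {X Y : Ω → ℕ} (hX : Measurable X) (hY : Measurable Y) {nx ny : ℕ}
  (hXv : ∀ ω, X ω < nx) (hYv : ∀ ω, Y ω < ny)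
include hX hY hXv hYv

-- joint sums to 1
lemma joint_sum_one :
    ∑ x ∈ range nx, ∑ y ∈ range ny, (ν {ω | X ω = x ∧ Y ω = y}).toReal = 1 := by
  have hinter : ∀ x y : ℕ, {ω | X ω = x ∧ Y ω = y} = {ω | X ω = x} ∩ {ω | Y ω = y} :=
    fun x y => rfl
  have h1 : ∀ x : ℕ, ∑ y ∈ range ny, ν ({ω | X ω = x} ∩ {ω | Y ω = y}) = ν {ω | X ω = x} :=
    fun x => sum_meas_inter ν hY hYv (hX (measurableSet_singleton x))
  have h2 : ∑ x ∈ range nx, ν {ω | X ω = x} = 1 := by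
    have h3 := sum_meas_inter ν hX hXv MeasurableSet.univ
    simpa using h3
  calc ∑ x ∈ range nx, ∑ y ∈ range ny, (ν {ω | X ω = x ∧ Y ω = y}).toReal
      = ∑ x ∈ range nx, (ν {ω | X ω = x}).toReal := by
        refine Finset.sum_congr rfl fun x _ => ?_
        rw [← h1 x, ENNReal.toReal_sum (fun y _ => measure_ne_top ν _)]
        exact Finset.sum_congr rfl fun y _ => by rw [hinter]
    _ = 1 := by
        rw [← ENNReal.toReal_sum (fun x _ => measure_ne_top ν _), h2, ENNReal.toReal_one]

omit hY hYv in
lemma marg_sum_one : ∑ x ∈ range nx, (ν {ω | X ω = x}).toReal = 1 := by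
  have h2 : ∑ x ∈ range nx, ν {ω | X ω = x} = 1 := by
    have h3 := sum_meas_inter ν hX hXv MeasurableSet.univ
    simpa using h3
  rw [← ENNReal.toReal_sum (fun x _ => measure_ne_top ν _), h2, ENNReal.toReal_one]

lemma mutualInfoNat_core :
    (∀ x0 y0 : ℕ, x0 < nx → y0 < ny →
      (ν {ω | X ω = x0 ∧ Y ω = y0}).toReal ≠
        (ν {ω | X ω = x0}).toReal * (ν {ω | Y ω = y0}).toReal →
      0 < mutualInfoNat ν X Y nx ny) ∧ 0 ≤ mutualInfoNat ν X Y nx ny := by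
  set F : ℕ × ℕ → ℝ := fun xy => (ν {ω | X ω = xy.1 ∧ Y ω = xy.2}).toReal with hF
  set G : ℕ × ℕ → ℝ := fun xy =>
    (ν {ω | X ω = xy.1}).toReal * (ν {ω | Y ω = xy.2}).toReal with hG
  have hmi : mutualInfoNat ν X Y nx ny
      = ∑ xy ∈ range nx ×ˢ range ny, F xy * Real.log (F xy / G xy) := by
    rw [Finset.sum_product]
    rfl
  have hFsum : ∑ xy ∈ range nx ×ˢ range ny, F xy = 1 := by
    rw [Finset.sum_product]
    exact joint_sum_one ν hX hY hXv hYv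
  have hGsum : ∑ xy ∈ range nx ×ˢ range ny, G xy = 1 := by
    rw [Finset.sum_product]
    have he : ∑ x ∈ range nx, ∑ y ∈ range ny, G (x, y)
        = (∑ x ∈ range nx, (ν {ω | X ω = x}).toReal) *
          ∑ y ∈ range ny, (ν {ω | Y ω = y}).toReal := by
      rw [Finset.sum_mul]
      exact Finset.sum_congr rfl fun x _ => by rw [Finset.mul_sum]
    rw [he, marg_sum_one ν hX hXv, marg_sum_one ν hY hYv, one_mul]
  have hFG : ∀ xy : ℕ × ℕ, F xy ≠ 0 → G xy ≠ 0 := by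
    intro xy hne
    have hsub1 : ν {ω | X ω = xy.1 ∧ Y ω = xy.2} ≤ ν {ω | X ω = xy.1} :=
      measure_mono fun ω h => h.1
    have hsub2 : ν {ω | X ω = xy.1 ∧ Y ω = xy.2} ≤ ν {ω | Y ω = xy.2} :=
      measure_mono fun ω h => h.2
    have h0 : ν {ω | X ω = xy.1 ∧ Y ω = xy.2} ≠ 0 := by
      intro h; exact hne (by simp [hF, h])
    have p1 : (ν {ω | X ω = xy.1}).toReal ≠ 0 := by
      rw [ENNReal.toReal_ne_zero]
      exact ⟨fun h => h0 (le_antisymm (h ▸ hsub1) zero_le), measure_ne_top ν _⟩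
    have p2 : (ν {ω | Y ω = xy.2}).toReal ≠ 0 := by
      rw [ENNReal.toReal_ne_zero]
      exact ⟨fun h => h0 (le_antisymm (h ▸ hsub2) zero_le), measure_ne_top ν _⟩
    exact mul_ne_zero p1 p2
  have hterm : ∀ xy ∈ range nx ×ˢ range ny, F xy - G xy ≤ F xy * Real.log (F xy / G xy) :=
    fun xy _ => gibbs_term ENNReal.toReal_nonneg
      (mul_nonneg ENNReal.toReal_nonneg ENNReal.toReal_nonneg) (hFG xy)
  have hdiff : ∑ xy ∈ range nx ×ˢ range ny, (F xy - G xy) = 0 := by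
    rw [Finset.sum_sub_distrib, hFsum, hGsum, sub_self]
  constructor
  · intro x0 y0 hx0 hy0 hw
    have hstrict : F (x0, y0) - G (x0, y0) < F (x0, y0) * Real.log (F (x0, y0) / G (x0, y0)) :=
      gibbs_term_strict ENNReal.toReal_nonneg
        (mul_nonneg ENNReal.toReal_nonneg ENNReal.toReal_nonneg) (hFG _) hw
    have hlt : ∑ xy ∈ range nx ×ˢ range ny, (F xy - G xy)
        < ∑ xy ∈ range nx ×ˢ range ny, F xy * Real.log (F xy / G xy) :=
      Finset.sum_lt_sum hterm ⟨(x0, y0), by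
        simp [Finset.mem_product, hx0, hy0], hstrict⟩
    rw [hmi]; linarith [hdiff ▸ hlt]
  · have hle : ∑ xy ∈ range nx ×ˢ range ny, (F xy - G xy)
        ≤ ∑ xy ∈ range nx ×ˢ range ny, F xy * Real.log (F xy / G xy) :=
      Finset.sum_le_sum hterm
    rw [hmi]; linarith [hdiff ▸ hle]
end Gibbs
lemma key {Ω : Type*} [MeasurableSpace Ω] (μ : Measure Ω) [IsProbabilityMeasure μ]
    (X : Fin 4 → Ω → ℕ)
    (hIndep : iIndepFun X μ)
    (hMeas : ∀ i, Measurable (X i))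
    (hUnif : ∀ i, ∀ k : ℕ, k < 1000 → μ {ω | X i ω = k} = 1 / 1000)
    (p : ℕ) (hp0 : 0 < p) (hp9 : 9 * p < 1000) :
    0 < condMutualInfoNat μ
        (fun ω => X 0 ω / p % 10)
        (fun ω => (X 0 ω / p % 10 + X 1 ω / p % 10 + X 2 ω / p % 10 + X 3 ω / p % 10
          + (X 0 ω % p + X 1 ω % p + X 2 ω % p + X 3 ω % p) / p) % 10)
        (fun ω => (X 0 ω / p % 10 + X 1 ω / p % 10 + X 2 ω / p % 10 + X 3 ω / p % 10
          + (X 0 ω % p + X 1 ω % p + X 2 ω % p + X 3 ω % p) / p) / 10)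
        10 10 4 := by
  set S : Ω → ℕ := fun ω => X 0 ω / p % 10 + X 1 ω / p % 10 + X 2 ω / p % 10 + X 3 ω / p % 10
    + (X 0 ω % p + X 1 ω % p + X 2 ω % p + X 3 ω % p) / p with hS_def
  set A : Ω → ℕ := fun ω => X 0 ω / p % 10 with hA_def
  set E : Ω → ℕ := fun ω => S ω % 10 with hE_def
  set K : Ω → ℕ := fun ω => S ω / 10 with hK_def
  -- measurability
  have hS : Measurable S := by
    have : S = (fun v : ℕ × ℕ × ℕ × ℕ => v.1 / p % 10 + v.2.1 / p % 10 + v.2.2.1 / p % 10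
        + v.2.2.2 / p % 10 + (v.1 % p + v.2.1 % p + v.2.2.1 % p + v.2.2.2 % p) / p)
        ∘ (fun ω => (X 0 ω, X 1 ω, X 2 ω, X 3 ω)) := rfl
    rw [this]
    exact (measurable_of_countable _).comp
      ((hMeas 0).prodMk ((hMeas 1).prodMk ((hMeas 2).prodMk (hMeas 3))))
  have hA : Measurable A := (measurable_of_countable (fun n : ℕ => n / p % 10)).comp (hMeas 0)
  have hE : Measurable E := (measurable_of_countable (fun n : ℕ => n % 10)).comp hS
  have hK : Measurable K := (measurable_of_countable (fun n : ℕ => n / 10)).comp hS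
  have hAv : ∀ ω, A ω < 10 := fun ω => Nat.mod_lt _ (by norm_num)
  have hEv : ∀ ω, E ω < 10 := fun ω => Nat.mod_lt _ (by norm_num)
  have hKset : MeasurableSet {ω | K ω = 0} := hK (measurableSet_singleton 0)
  -- μ {K = 0} ≠ 0
  have hK0 : μ {ω | K ω = 0} ≠ 0 := by
    intro h
    refine prod_event_ne_zero μ X hIndep hUnif (fun _ => 0) (fun j => by norm_num)
      (measure_mono_null ?_ h)
    intro ω hω
    have h0 : X 0 ω = 0 := hω 0
    have h1 : X 1 ω = 0 := hω 1
    have h2 : X 2 ω = 0 := hω 2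
    have h3 : X 3 ω = 0 := hω 3
    show S ω / 10 = 0
    simp [hS_def, h0, h1, h2, h3]
  set ν := μ[|{ω | K ω = 0}] with hν_def
  haveI : IsProbabilityMeasure ν := cond_isProbabilityMeasure hK0
  -- the joint probability at (9,0) vanishes
  have hzero : ν {ω | A ω = 9 ∧ E ω = 0} = 0 := by
    rw [hν_def, cond_apply hKset]
    have hempty : {ω | K ω = 0} ∩ {ω | A ω = 9 ∧ E ω = 0} = ∅ := by
      ext ω
      simp only [Set.mem_inter_iff, Set.mem_setOf_eq, Set.mem_empty_iff_false, iff_false,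
        not_and]
      intro hk ha he
      exact arith1 _ _ _ _ _ ha hk he
    rw [hempty]
    simp
  -- marginals are positive
  have hA9 : ν {ω | A ω = 9} ≠ 0 := by
    rw [hν_def, cond_apply hKset]
    refine mul_ne_zero (ENNReal.inv_ne_zero.2 (measure_ne_top μ _)) ?_
    intro h
    refine prod_event_ne_zero μ X hIndep hUnif (fun j => if j = 0 then 9 * p else 0)
      (fun j => by fin_cases j <;> simp <;> omega) (measure_mono_null ?_ h)
    intro ω hω
    have h0 : X 0 ω = 9 * p := by simpa using hω 0
    have h1 : X 1 ω = 0 := by simpa using hω 1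
    have h2 : X 2 ω = 0 := by simpa using hω 2
    have h3 : X 3 ω = 0 := by simpa using hω 3
    have hd : X 0 ω / p = 9 := by rw [h0, Nat.mul_div_cancel _ hp0]
    have hm : X 0 ω % p = 0 := by rw [h0, Nat.mul_mod_left]
    constructor
    · show S ω / 10 = 0
      simp [hS_def, hd, hm, h1, h2, h3]
    · show A ω = 9
      simp [hA_def, hd]
  have hE0 : ν {ω | E ω = 0} ≠ 0 := by
    rw [hν_def, cond_apply hKset]
    refine mul_ne_zero (ENNReal.inv_ne_zero.2 (measure_ne_top μ _)) ?_
    intro h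
    refine prod_event_ne_zero μ X hIndep hUnif (fun _ => 0) (fun j => by norm_num)
      (measure_mono_null ?_ h)
    intro ω hω
    have h0 : X 0 ω = 0 := hω 0
    have h1 : X 1 ω = 0 := hω 1
    have h2 : X 2 ω = 0 := hω 2
    have h3 : X 3 ω = 0 := hω 3
    constructor
    · show S ω / 10 = 0
      simp [hS_def, h0, h1, h2, h3]
    · show E ω = 0
      simp [hE_def, hS_def, h0, h1, h2, h3]
  -- assemble
  have hw : (ν {ω | A ω = 9 ∧ E ω = 0}).toReal ≠
      (ν {ω | A ω = 9}).toReal * (ν {ω | E ω = 0}).toReal := by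
    rw [hzero]
    simp only [ENNReal.toReal_zero]
    exact fun h => (mul_ne_zero
      (ENNReal.toReal_ne_zero.2 ⟨hA9, measure_ne_top ν _⟩)
      (ENNReal.toReal_ne_zero.2 ⟨hE0, measure_ne_top ν _⟩)) h.symm
  unfold condMutualInfoNat
  apply Finset.sum_pos'
  · intro z _
    rcases eq_or_ne (μ {ω | K ω = z}) 0 with h | h
    · rw [h]; simp
    · haveI : IsProbabilityMeasure (μ[|{ω | K ω = z}]) := cond_isProbabilityMeasure h
      exact mul_nonneg ENNReal.toReal_nonneg
        (mutualInfoNat_core (μ[|{ω | K ω = z}]) hA hE hAv hEv).2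
  · refine ⟨0, by simp, ?_⟩
    have wpos : 0 < (μ {ω | K ω = 0}).toReal :=
      ENNReal.toReal_pos hK0 (measure_ne_top μ _)
    have Ipos : 0 < mutualInfoNat ν A E 10 10 :=
      (mutualInfoNat_core ν hA hE hAv hEv).1 9 0 (by norm_num) (by norm_num) hw
    exact mul_pos wpos Ipos

/-- For `A, B, C, D` independent uniform on `{0,...,999}`, for each place `i ∈ {1,2,3}`,
letting `a_i, b_i, c_i, d_i` be the digits at place `10^(3-i)`, `C_in` the carry into that
place, `e_i = (a_i + b_i + c_i + d_i + C_in) % 10` and `K` the carry out, the conditional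
mutual information `I(a_i ; e_i | K)` is strictly positive. -/
theorem condMutualInfo_digit_pos
    {Ω : Type*} [MeasurableSpace Ω] (μ : Measure Ω) [IsProbabilityMeasure μ]
    (X : Fin 4 → Ω → ℕ)
    (hIndep : iIndepFun X μ)
    (hMeas : ∀ i, Measurable (X i))
    (hVal : ∀ i ω, X i ω < 1000)
    (hUnif : ∀ i, ∀ k : ℕ, k < 1000 → μ {ω | X i ω = k} = 1 / 1000) :
    ∀ i : ℕ, i ∈ ({1, 2, 3} : Set ℕ) →
      0 < condMutualInfoNat μ
          (fun ω => X 0 ω / 10 ^ (3 - i) % 10)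
          (fun ω => (X 0 ω / 10 ^ (3 - i) % 10 + X 1 ω / 10 ^ (3 - i) % 10
            + X 2 ω / 10 ^ (3 - i) % 10 + X 3 ω / 10 ^ (3 - i) % 10
            + (X 0 ω % 10 ^ (3 - i) + X 1 ω % 10 ^ (3 - i) + X 2 ω % 10 ^ (3 - i)
                + X 3 ω % 10 ^ (3 - i)) / 10 ^ (3 - i)) % 10)
          (fun ω => (X 0 ω / 10 ^ (3 - i) % 10 + X 1 ω / 10 ^ (3 - i) % 10
            + X 2 ω / 10 ^ (3 - i) % 10 + X 3 ω / 10 ^ (3 - i) % 10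
            + (X 0 ω % 10 ^ (3 - i) + X 1 ω % 10 ^ (3 - i) + X 2 ω % 10 ^ (3 - i)
                + X 3 ω % 10 ^ (3 - i)) / 10 ^ (3 - i)) / 10)
          10 10 4 := by
  intro i hi
  have hi' : i = 1 ∨ i = 2 ∨ i = 3 := by simpa using hi
  have h9 : 9 * 10 ^ (3 - i) < 1000 := by rcases hi' with h | h | h <;> subst h <;> norm_num
  exact key μ X hIndep hMeas hUnif (10 ^ (3 - i)) (by positivity) h9
end

section
/- Let A, B, C, D be independent uniform on {0,...,999}, S = A+B+C+D. Let a1 = (A/100) mod 10 be the hundreds digit of A, e1 = (S/100) mod 10 the hundreds digit of S, and K the carry out of the hundreds column, K = floor((a1+b1+c1+d1+C_in)/10) where b1, c1, d1 are hundreds digits of B, C, D and C_in is the carry into the hundreds column. Then a1 and e1 are independent unconditionally, but they are not conditionally independent given K. -/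
/-!
Reduced mod 1000, `X 1` is uniform on `ZMod 1000` and independent of `(X 0, X 2, X 3)`, so
translating it by `X 0 + X 2 + X 3` leaves it uniform and independent of that triple, hence of the
hundreds digit of `X 0`; the hundreds digit of the sum is read off this translate.
Without a carry out of the hundreds column the column sum is below 10, so a hundreds digit 9 of
`X 0` forces the hundreds digit 9 of the sum, whereas the outcomes `(900, 0, 0, 0)` and
`(0, 0, 0, 0)` show that `a1 = 9` and `e1 = 0` each have positive probability given no carry.
-/

open MeasureTheory ProbabilityTheory
open scoped ENNReal

namespace ProbabilityTheory

variable {Ω : Type*} [MeasurableSpace Ω] {μ : Measure Ω}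

lemma iIndepFun.indepFun_prodMk₃ {ι β : Type*} [MeasurableSpace β] {f : ι → Ω → β}
    (hf_Indep : iIndepFun f μ) (hf_meas : ∀ i, Measurable (f i)) (i j k l : ι)
    (hil : i ≠ l) (hjl : j ≠ l) (hkl : k ≠ l) :
    IndepFun (fun a => (f i a, f j a, f k a)) (f l) μ := by
  classical
  have hφ : Measurable fun p : ({i, j, k} : Finset ι) → β =>
      (p ⟨i, by simp⟩, p ⟨j, by simp⟩, p ⟨k, by simp⟩) := by fun_prop
  have hψ : Measurable fun p : ({l} : Finset ι) → β => p ⟨l, by simp⟩ := by fun_prop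
  exact (hf_Indep.indepFun_finset {i, j, k} {l} (by simp [hil.symm, hjl.symm, hkl.symm])
    hf_meas).comp hφ hψ

lemma IndepFun.indepFun_add_comp_of_isAddRightInvariant {β G : Type*} [MeasurableSpace β]
    [Add G] [MeasurableSpace G] [MeasurableAdd₂ G] [IsProbabilityMeasure μ] {U : Ω → G}
    {V : Ω → β} (hUV : IndepFun U V μ) (hU : Measurable U) (hV : Measurable V)
    {g : β → G} (hg : Measurable g)
    [(μ.map U).IsAddRightInvariant] :
    IndepFun V (fun ω => U ω + g (V ω)) μ := by
  have hZ : Measurable fun ω => U ω + g (V ω) := hU.add (hg.comp hV)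
  have hshear : MeasurePreserving (fun p : β × G => (p.1, p.2 + g p.1))
      ((μ.map V).prod (μ.map U)) ((μ.map V).prod (μ.map U)) :=
    (MeasurePreserving.id _).skew_product (g := fun v u => u + g v) (by fun_prop)
      (Filter.Eventually.of_forall fun v => map_add_right_eq_self _ _)
  have hjoint : μ.map (fun ω => (V ω, U ω + g (V ω))) = (μ.map V).prod (μ.map U) := by
    rw [← hshear.map_eq, ← (indepFun_iff_map_prod_eq_prod_map_map hV.aemeasurable
      hU.aemeasurable).1 hUV.symm, Measure.map_map (by fun_prop) (hV.prodMk hU)]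
    rfl
  have hlaw : μ.map (fun ω => U ω + g (V ω)) = μ.map U := by
    calc μ.map (fun ω => U ω + g (V ω))
        = (μ.map fun ω => (V ω, U ω + g (V ω))).map Prod.snd := by
          rw [Measure.map_map measurable_snd (hV.prodMk hZ)]; rfl
      _ = μ.map U := by
          have := Measure.isProbabilityMeasure_map (μ := μ) hV.aemeasurable
          rw [hjoint, Measure.map_snd_prod, measure_univ, one_smul]
  rw [indepFun_iff_map_prod_eq_prod_map_map hV.aemeasurable hZ.aemeasurable, hjoint, hlaw]

lemma iIndepFun.measure_forall_eq_ne_zero {ι β : Type*} [Fintype ι] [MeasurableSpace β]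
    [MeasurableSingletonClass β] {f : ι → Ω → β} (hf_Indep : iIndepFun f μ) (v : ι → β)
    (hv : ∀ i, μ {ω | f i ω = v i} ≠ 0) :
    μ {ω | ∀ i, f i ω = v i} ≠ 0 := by
  have hinter : {ω | ∀ i, f i ω = v i} = ⋂ i ∈ (Finset.univ : Finset ι), f i ⁻¹' {v i} := by
    ext ω; simp
  rw [hinter, hf_Indep.measure_inter_preimage_eq_mul _ fun i _ => measurableSet_singleton _]
  exact Finset.prod_ne_zero_iff.2 fun i _ => hv i

lemma cond_setOf_and_ne_mul [IsFiniteMeasure μ] {s : Set Ω} {p q : Ω → Prop}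
    (hs : MeasurableSet s) (hpq : μ (s ∩ {ω | p ω ∧ q ω}) = 0) (hp : μ (s ∩ {ω | p ω}) ≠ 0)
    (hq : μ (s ∩ {ω | q ω}) ≠ 0) :
    μ[{ω | p ω ∧ q ω}|s] ≠ μ[{ω | p ω}|s] * μ[{ω | q ω}|s] := by
  rw [cond_apply hs, hpq, mul_zero]
  exact (mul_ne_zero (cond_pos_of_inter_ne_zero hs hp).ne'
    (cond_pos_of_inter_ne_zero hs hq).ne').symm

end ProbabilityTheory

lemma ZMod.isAddRightInvariant_map_natCast {Ω : Type*} [MeasurableSpace Ω] {μ : Measure Ω}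
    {n : ℕ} [NeZero n] {N : Ω → ℕ} (hN : Measurable N) (hlt : ∀ ω, N ω < n) {c : ℝ≥0∞}
    (hunif : ∀ k < n, μ {ω | N ω = k} = c) :
    (μ.map fun ω => (N ω : ZMod n)).IsAddRightInvariant := by
  have hcast : Measurable fun ω => (N ω : ZMod n) := Measurable.of_discrete.comp hN
  have hsingleton : ∀ z : ZMod n, μ.map (fun ω => (N ω : ZMod n)) {z} = c := fun z => by
    rw [Measure.map_apply hcast (measurableSet_singleton z), ← hunif z.val z.val_lt]
    congr 1
    ext ω
    simp only [Set.mem_preimage, Set.mem_singleton_iff]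
    change _ ↔ N ω = z.val
    constructor
    · rintro rfl; exact (ZMod.val_natCast_of_lt (hlt ω)).symm
    · intro h; rw [h, ZMod.natCast_zmod_val]
  refine ⟨fun a => Measure.ext_of_singleton fun z => ?_⟩
  rw [Measure.map_apply (measurable_add_const a) (measurableSet_singleton z),
    Set.preimage_add_right_singleton, hsingleton, hsingleton]

lemma hundreds_digit_sum_eq_nine_of_carry_eq_zero (a b c d : ℕ)
    (hK : (a / 100 % 10 + b / 100 % 10 + c / 100 % 10 + d / 100 % 10
      + (a % 100 + b % 100 + c % 100 + d % 100) / 100) / 10 = 0)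
    (ha : a / 100 % 10 = 9) :
    (a + b + c + d) / 100 % 10 = 9 := by
  omega

/-- For `A, B, C, D` independent uniform on `{0,...,999}`, `S = A+B+C+D`: the hundreds
digit `a1` of `A` and the hundreds digit `e1` of `S` are independent unconditionally,
but are not conditionally independent given the carry `K` out of the hundreds column. -/
theorem hundreds_digits_indep_but_not_given_carry
    {Ω : Type*} [MeasurableSpace Ω] (μ : Measure Ω) [IsProbabilityMeasure μ]
    (X : Fin 4 → Ω → ℕ)
    (hIndep : iIndepFun X μ)
    (hMeas : ∀ i, Measurable (X i))
    (hVal : ∀ i ω, X i ω < 1000)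
    (hUnif : ∀ i, ∀ k : ℕ, k < 1000 → μ {ω | X i ω = k} = 1 / 1000) :
    IndepFun (fun ω => X 0 ω / 100 % 10)
        (fun ω => (X 0 ω + X 1 ω + X 2 ω + X 3 ω) / 100 % 10) μ
      ∧ ¬ ∀ k x y : ℕ,
          μ[|{ω | (X 0 ω / 100 % 10 + X 1 ω / 100 % 10 + X 2 ω / 100 % 10
              + X 3 ω / 100 % 10
              + (X 0 ω % 100 + X 1 ω % 100 + X 2 ω % 100 + X 3 ω % 100) / 100) / 10 = k}]
            {ω | X 0 ω / 100 % 10 = x ∧ (X 0 ω + X 1 ω + X 2 ω + X 3 ω) / 100 % 10 = y}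
          = μ[|{ω | (X 0 ω / 100 % 10 + X 1 ω / 100 % 10 + X 2 ω / 100 % 10
              + X 3 ω / 100 % 10
              + (X 0 ω % 100 + X 1 ω % 100 + X 2 ω % 100 + X 3 ω % 100) / 100) / 10 = k}]
              {ω | X 0 ω / 100 % 10 = x}
            * μ[|{ω | (X 0 ω / 100 % 10 + X 1 ω / 100 % 10 + X 2 ω / 100 % 10
                + X 3 ω / 100 % 10
                + (X 0 ω % 100 + X 1 ω % 100 + X 2 ω % 100 + X 3 ω % 100) / 100) / 10 = k}]
                {ω | (X 0 ω + X 1 ω + X 2 ω + X 3 ω) / 100 % 10 = y} := by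
  have hpos : ∀ (t : Set Ω) (v : Fin 4 → ℕ), (∀ i, v i < 1000) →
      {ω | ∀ i, X i ω = v i} ⊆ t → μ t ≠ 0 := fun t v hv hsub h =>
    hIndep.measure_forall_eq_ne_zero v (fun i => by rw [hUnif i _ (hv i)]; norm_num)
      (measure_mono_null hsub h)
  refine ⟨?_, fun hcond => ?_⟩
  · have hUV : IndepFun (fun ω => (X 1 ω : ZMod 1000)) (fun ω => (X 0 ω, X 2 ω, X 3 ω)) μ :=
      (hIndep.indepFun_prodMk₃ hMeas 0 2 3 1 (by decide) (by decide) (by decide)).symm.comp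
        (φ := Nat.cast) (ψ := id) .of_discrete measurable_id
    have := ZMod.isAddRightInvariant_map_natCast (hMeas 1) (hVal 1) (hUnif 1)
    have key := hUV.indepFun_add_comp_of_isAddRightInvariant
      (Measurable.of_discrete.comp (hMeas 1)) (by fun_prop)
      (g := fun v => ((v.1 + v.2.1 + v.2.2 : ℕ) : ZMod 1000)) .of_discrete
    convert key.comp (φ := fun v => v.1 / 100 % 10) (ψ := fun z => z.val / 100 % 10)
      .of_discrete .of_discrete using 1
    · rfl
    · funext ω
      simp only [Function.comp_apply, ← Nat.cast_add, ZMod.val_natCast]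
      omega
  · refine cond_setOf_and_ne_mul ?_ ?_ ?_ ?_ (hcond 0 9 0)
    · measurability
    · refine measure_mono_null (fun ω ⟨hK, ha, he⟩ => ?_) measure_empty
      have := hundreds_digit_sum_eq_nine_of_carry_eq_zero _ _ _ _ hK ha
      exact absurd (this.symm.trans he) (by decide)
    · exact hpos _ ![900, 0, 0, 0] (by decide) fun ω hω => by simp [hω 0, hω 1, hω 2, hω 3]
    · exact hpos _ 0 (by decide) fun ω hω => by simp [hω 0, hω 1, hω 2, hω 3]
end
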